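/- Let ν be a probability measure on (0,∞). Then ∫₀^∞ ν([t,∞))^{1/d} dt < ∞ implies ∫₀^∞ t^d ν(dt) < ∞. (The integrability condition on the 1/d-th power of the tail is stronger than finiteness of the d-th moment.) -/

import Mathlib

/-!
Write `T t = ν [t, ∞)` and `A = ∫₀^∞ T^{1/p}`. Since `T` is antitone,
`t T(t)^{1/p} ≤ ∫₀^t T^{1/p} ≤ A`, so in the layer cake formula
`∫ x^p dν = p ∫₀^∞ T(t) t^{p-1} dt` the integrand satisfies
`T(t) t^{p-1} = T(t)^{1/p} (t T(t)^{1/p})^{p-1} ≤ A^{p-1} T(t)^{1/p}`,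
whose integral is `A^p < ∞`.
-/

open MeasureTheory Set ENNReal

theorem Antitone.ofReal_mul_le_setLIntegral_Ioi {g : ℝ → ℝ≥0∞} (hg : Antitone g) (t : ℝ) :
    ENNReal.ofReal t * g t ≤ ∫⁻ s in Ioi 0, g s :=
  calc ENNReal.ofReal t * g t = ∫⁻ _ in Ioc 0 t, g t := by
        rw [setLIntegral_const, Real.volume_Ioc, sub_zero, mul_comm]
    _ ≤ ∫⁻ s in Ioc 0 t, g s := setLIntegral_mono' measurableSet_Ioc fun _ hs => hg hs.2
    _ ≤ ∫⁻ s in Ioi 0, g s := lintegral_mono_set Ioc_subset_Ioi_self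

theorem ENNReal.mul_rpow_sub_one_eq (a x : ℝ≥0∞) {p : ℝ} (hp : 1 ≤ p) :
    a * x ^ (p - 1) = a ^ (1 / p) * (x * a ^ (1 / p)) ^ (p - 1) := by
  have hp0 : 0 < p := by linarith
  rw [mul_rpow_of_nonneg _ _ (by linarith), ← rpow_mul, mul_left_comm,
    ← rpow_add_of_nonneg _ _ (by positivity) (by nlinarith [one_div_pos.2 hp0]),
    show 1 / p + 1 / p * (p - 1) = 1 by field_simp; ring, rpow_one, mul_comm]

theorem lintegral_ofReal_rpow_ne_top_of_setLIntegral_tail_rpow_ne_top {ν : Measure ℝ}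
    (hν : ∀ᵐ x ∂ν, 0 ≤ x) {p : ℝ} (hp : 1 ≤ p)
    (htail : ∫⁻ t in Ioi 0, ν (Ici t) ^ (1 / p) ≠ ⊤) :
    ∫⁻ x, ENNReal.ofReal (x ^ p) ∂ν ≠ ⊤ := by
  set A := ∫⁻ t in Ioi 0, ν (Ici t) ^ (1 / p)
  have hanti : Antitone fun t => ν (Ici t) ^ (1 / p) := fun s t hst =>
    rpow_le_rpow (measure_mono (Ici_subset_Ici.2 hst)) (by positivity)
  have hbound : ∀ t ∈ Ioi (0 : ℝ),
      ν (Ici t) * ENNReal.ofReal (t ^ (p - 1)) ≤ ν (Ici t) ^ (1 / p) * A ^ (p - 1) := by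
    intro t ht
    rw [← ofReal_rpow_of_nonneg (le_of_lt ht) (by linarith), mul_rpow_sub_one_eq _ _ hp]
    gcongr
    exact hanti.ofReal_mul_le_setLIntegral_Ioi t
  rw [lintegral_rpow_eq_lintegral_meas_le_mul ν hν aemeasurable_id (by linarith)]
  refine mul_ne_top ofReal_ne_top
    (ne_top_of_le_ne_top ?_ (setLIntegral_mono' measurableSet_Ioi hbound))
  rw [lintegral_mul_const' _ _ (rpow_ne_top_of_nonneg (by linarith) htail)]
  exact mul_ne_top htail (rpow_ne_top_of_nonneg (by linarith) htail)

theorem stmt_10_general (d : ℕ) (ν : Measure ℝ) [IsProbabilityMeasure ν]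
    (hsupp : ν (Set.Iic 0) = 0)
    (htail : ∫⁻ t in Set.Ioi (0:ℝ), (ν (Set.Ici t)) ^ ((1 : ℝ) / d) ≠ ⊤) :
    ∫⁻ t, ENNReal.ofReal (t ^ d) ∂ν ≠ ⊤ := by
  rcases Nat.eq_zero_or_pos d with rfl | hd
  · simp
  have hν : ∀ᵐ x ∂ν, 0 ≤ x := by
    rw [ae_iff]
    exact measure_mono_null (fun x hx => le_of_lt (not_le.1 hx)) hsupp
  simp_rw [← Real.rpow_natCast]
  exact lintegral_ofReal_rpow_ne_top_of_setLIntegral_tail_rpow_ne_top hν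
    (by exact_mod_cast hd) htail

theorem stmt_10 (d : ℕ) (hd : 2 ≤ d) (ν : Measure ℝ) [IsProbabilityMeasure ν]
    (hsupp : ν (Set.Iic 0) = 0)
    (htail : ∫⁻ t in Set.Ioi (0:ℝ), (ν (Set.Ici t)) ^ ((1 : ℝ) / d) ≠ ⊤) :
    ∫⁻ t, ENNReal.ofReal (t ^ d) ∂ν ≠ ⊤ :=
  stmt_10_general d ν hsupp htail
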